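/- The martingale R_m = Σ_{v ∈ V, |v| < m} L_v·C(U^v) converges, as m → ∞, almost surely and in L² to a square-integrable random variable Q with E[Q] = 0. (The distribution of Q is the Quicksort distribution.) -/

import Mathlib

open MeasureTheory ProbabilityTheory Filter Finset

noncomputable section

/-- The Quicksort cost function `C(x) = 1 + 2x·ln x + 2(1-x)·ln(1-x)`
(with `Real.log 0 = 0`, encoding the convention `0·ln 0 = 0`). -/
def Cq (x : ℝ) : ℝ := 1 + 2 * x * Real.log x + 2 * (1 - x) * Real.log (1 - x)

/-- Multiplicative path weights on the binary tree `V = {1,2}*` (words over `Bool`,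
where `false` is the letter `1` and `true` is the letter `2`): `Lw U v w` is the
weight `L^v_w` of the path from `v` to `vw`, with `L^v_∅ = 1`,
`L^v_{w1} = L^v_w·U^{vw}` and `L^v_{w2} = L^v_w·(1 − U^{vw})`. -/
def Lw {Ω : Type*} (U : List Bool → Ω → ℝ) : List Bool → List Bool → Ω → ℝ
  | _, [], _ => 1
  | v, b :: w, ω => (if b then 1 - U v ω else U v ω) * Lw U (v ++ [b]) w ω

/-- The partial sums `R^v_m = Σ_{w ∈ V, |w| < m} L^v_w·C(U^{vw})` of the weighted
branching process defining the Quicksort distribution. -/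
def QSsum {Ω : Type*} (U : List Bool → Ω → ℝ) (v : List Bool) (m : ℕ) (ω : Ω) : ℝ :=
  ∑ k ∈ Finset.range m, ∑ w : Fin k → Bool,
    Lw U v (List.ofFn w) ω * Cq (U (v ++ List.ofFn w) ω)

open scoped ENNReal Topology

/-!
The level sums `D_k = Σ_{|w| = k} L_w C(U^w)` have mean zero and are orthogonal in `L²`: in
`L_w C(U^w) · L_{w'} C(U^{w'})` with `|w| = |w'|`, `w ≠ w'`, the factor `C(U^w)` is independent
of the rest, and `E C(U) = 0`. Since `E L_w² = 3^{-|w|}`, this gives `E D_k² = (2/3)^k E C(U)²`,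
so `Σ ‖D_k‖₂ < ∞`. A series with summable `L²`-norms converges almost surely and in `L²`, and its
sum has mean `Σ E D_k = 0`.
-/

section SummableLp

variable {Ω E : Type*} [MeasurableSpace Ω] {μ : Measure Ω} [NormedAddCommGroup E]
  {f : ℕ → Ω → E} {p : ℝ≥0∞}

theorem eLpNorm_tsum_le (hp : 1 ≤ p) (hf : ∀ k, AEStronglyMeasurable (f k) μ)
    (hsum : ∀ᵐ ω ∂μ, Summable fun k => f k ω) :
    eLpNorm (fun ω => ∑' k, f k ω) p μ ≤ ∑' k, eLpNorm (f k) p μ :=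
  calc eLpNorm (fun ω => ∑' k, f k ω) p μ
      ≤ atTop.liminf fun n => eLpNorm (∑ k ∈ range n, f k) p μ := by
        refine Lp.eLpNorm_lim_le_liminf_eLpNorm (fun n => Finset.aestronglyMeasurable_sum _
          fun k _ => hf k) _ ?_
        filter_upwards [hsum] with ω hω
        simpa only [Finset.sum_apply] using hω.hasSum.tendsto_sum_nat
    _ ≤ atTop.liminf fun n => ∑ k ∈ range n, eLpNorm (f k) p μ :=
        liminf_le_liminf (Eventually.of_forall fun n => eLpNorm_sum_le (fun k _ => hf k) hp)
    _ = ∑' k, eLpNorm (f k) p μ := (ENNReal.tendsto_nat_tsum _).liminf_eq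

theorem integral_tsum_of_tsum_eLpNorm_ne_top [NormedSpace ℝ E] [IsProbabilityMeasure μ]
    (hp : 1 ≤ p) (hf : ∀ k, AEStronglyMeasurable (f k) μ) (h : ∑' k, eLpNorm (f k) p μ ≠ ∞) :
    ∫ ω, ∑' k, f k ω ∂μ = ∑' k, ∫ ω, f k ω ∂μ := by
  refine integral_tsum hf (ne_top_of_le_ne_top h (ENNReal.tsum_le_tsum fun k => ?_))
  rw [← eLpNorm_one_eq_lintegral_enorm]
  exact eLpNorm_le_eLpNorm_of_exponent_le hp (hf k)

variable [CompleteSpace E]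

theorem ae_summable_of_tsum_eLpNorm_ne_top (hp : 1 ≤ p)
    (hf : ∀ k, AEStronglyMeasurable (f k) μ) (h : ∑' k, eLpNorm (f k) p μ ≠ ∞) :
    ∀ᵐ ω ∂μ, Summable fun k => f k ω := by
  filter_upwards [summable_norm_of_tsum_eLpNorm_ne_top hp hf h] with ω hω using hω.of_norm

theorem memLp_tsum (hp : 1 ≤ p) (hf : ∀ k, AEStronglyMeasurable (f k) μ)
    (h : ∑' k, eLpNorm (f k) p μ ≠ ∞) :
    MemLp (fun ω => ∑' k, f k ω) p μ := by
  have hsum := ae_summable_of_tsum_eLpNorm_ne_top hp hf h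
  refine ⟨aestronglyMeasurable_of_tendsto_ae atTop
    (fun n => Finset.aestronglyMeasurable_sum (range n) fun k _ => hf k) ?_, ?_⟩
  · filter_upwards [hsum] with ω hω
    simpa only [Finset.sum_apply] using hω.hasSum.tendsto_sum_nat
  · exact (eLpNorm_tsum_le hp hf hsum).trans_lt h.lt_top

theorem tendsto_eLpNorm_sum_range_sub_tsum (hp : 1 ≤ p)
    (hf : ∀ k, AEStronglyMeasurable (f k) μ) (h : ∑' k, eLpNorm (f k) p μ ≠ ∞) :
    Tendsto (fun m => eLpNorm (fun ω => ∑ k ∈ range m, f k ω - ∑' k, f k ω) p μ) atTop (𝓝 0) := by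
  have hsum := ae_summable_of_tsum_eLpNorm_ne_top hp hf h
  have htail (m : ℕ) : eLpNorm (fun ω => ∑ k ∈ range m, f k ω - ∑' k, f k ω) p μ
      ≤ ∑' k, eLpNorm (f (k + m)) p μ := by
    have hrem : (fun ω => ∑ k ∈ range m, f k ω - ∑' k, f k ω)
        =ᵐ[μ] -fun ω => ∑' k, f (k + m) ω := by
      filter_upwards [hsum] with ω hω
      rw [Pi.neg_apply, ← hω.sum_add_tsum_nat_add m]
      abel
    rw [eLpNorm_congr_ae hrem, eLpNorm_neg]
    refine eLpNorm_tsum_le hp (fun k => hf (k + m)) ?_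
    filter_upwards [hsum] with ω hω using (summable_nat_add_iff m).2 hω
  exact tendsto_of_tendsto_of_tendsto_of_le_of_le tendsto_const_nhds
    (ENNReal.tendsto_sum_nat_add _ h) (fun _ => bot_le) htail

end SummableLp

section L2

variable {Ω : Type*} [MeasurableSpace Ω] {μ : Measure Ω}

theorem eLpNorm_two_eq_ofReal_sqrt_integral_sq {f : Ω → ℝ} (hf : MemLp f 2 μ) :
    eLpNorm f 2 μ = ENNReal.ofReal √(∫ ω, f ω ^ 2 ∂μ) := by
  rw [hf.eLpNorm_eq_integral_rpow_norm two_ne_zero ENNReal.ofNat_ne_top, Real.sqrt_eq_rpow]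
  norm_num [Real.rpow_two, sq_abs]

theorem integral_sum_sq_of_orthogonal {ι : Type*} (s : Finset ι) {X : ι → Ω → ℝ}
    (hX : ∀ i ∈ s, MemLp (X i) 2 μ)
    (horth : ∀ i ∈ s, ∀ j ∈ s, i ≠ j → ∫ ω, X i ω * X j ω ∂μ = 0) :
    ∫ ω, (∑ i ∈ s, X i ω) ^ 2 ∂μ = ∑ i ∈ s, ∫ ω, X i ω ^ 2 ∂μ := by
  have hint : ∀ i ∈ s, ∀ j ∈ s, Integrable (fun ω => X i ω * X j ω) μ :=
    fun i hi j hj => (hX i hi).integrable_mul (hX j hj)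
  simp_rw [sq, Finset.sum_mul_sum]
  rw [integral_finsetSum s fun i hi => integrable_finsetSum s fun j hj => hint i hi j hj]
  refine Finset.sum_congr rfl fun i hi => ?_
  rw [integral_finsetSum s fun j hj => hint i hi j hj]
  exact Finset.sum_eq_single_of_mem i hi fun j hj hji => horth i hi j hj hji.symm

end L2

section GeneratedSigmaAlgebra

variable {ι Ω : Type*} (U : ι → Ω → ℝ)

abbrev sigmaGen (S : Set ι) : MeasurableSpace Ω :=
  ⨆ i ∈ S, MeasurableSpace.comap (U i) inferInstance

variable {U}

theorem measurable_sigmaGen {S : Set ι} {i : ι} (hi : i ∈ S) : Measurable[sigmaGen U S] (U i) :=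
  Measurable.of_comap_le <|
    le_iSup₂ (f := fun j (_ : j ∈ S) => MeasurableSpace.comap (U j) inferInstance) i hi

theorem measurable_sigmaGen_comp {S : Set ι} {i : ι} (hi : i ∈ S) {h : ℝ → ℝ}
    (hh : Measurable h) : Measurable[sigmaGen U S] fun ω => h (U i ω) :=
  hh.comp (measurable_sigmaGen hi)

theorem sigmaGen_mono {S T : Set ι} (hST : S ⊆ T) : sigmaGen U S ≤ sigmaGen U T :=
  biSup_mono hST

variable [mΩ : MeasurableSpace Ω]

theorem sigmaGen_le (hU : ∀ i, Measurable (U i)) (S : Set ι) : sigmaGen U S ≤ mΩ :=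
  iSup₂_le fun i _ => (hU i).comap_le

theorem integral_mul_eq_mul_integral_of_sigmaGen {μ : Measure Ω} [IsProbabilityMeasure μ]
    (hU : ∀ i, Measurable (U i)) (hind : iIndepFun U μ) {S T : Set ι} (hST : Disjoint S T)
    {f g : Ω → ℝ} (hf : Measurable[sigmaGen U S] f) (hg : Measurable[sigmaGen U T] g) :
    ∫ ω, f ω * g ω ∂μ = (∫ ω, f ω ∂μ) * ∫ ω, g ω ∂μ := by
  have hfg : IndepFun f g μ := (IndepFun_iff_Indep f g μ).2 <|
    indep_of_indep_of_le_right (indep_of_indep_of_le_left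
      (indep_iSup_of_disjoint (fun i => (hU i).comap_le) hind.iIndep hST) hf.comap_le)
      hg.comap_le
  exact hfg.integral_mul_eq_mul_integral
    (hf.mono (sigmaGen_le hU S) le_rfl).aestronglyMeasurable
    (hg.mono (sigmaGen_le hU T) le_rfl).aestronglyMeasurable

end GeneratedSigmaAlgebra

section Uniform

variable {ι Ω : Type*} [MeasurableSpace Ω] {P : Measure Ω}

theorem ae_forall_mem_Icc [Countable ι] {U : ι → Ω → ℝ} (hU : ∀ i, Measurable (U i))
    (hunif : ∀ i, Measure.map (U i) P = volume.restrict (Set.Icc (0 : ℝ) 1)) :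
    ∀ᵐ ω ∂P, ∀ i, U i ω ∈ Set.Icc (0 : ℝ) 1 :=
  ae_all_iff.2 fun i => ae_of_ae_map (hU i).aemeasurable <| by
    rw [hunif i]
    exact ae_restrict_mem measurableSet_Icc

theorem integral_comp_eq_intervalIntegral {X : Ω → ℝ} (hX : Measurable X)
    (hunif : Measure.map X P = volume.restrict (Set.Icc (0 : ℝ) 1)) {h : ℝ → ℝ}
    (hh : Measurable h) : ∫ ω, h (X ω) ∂P = ∫ x in (0 : ℝ)..1, h x := by
  rw [← integral_map hX.aemeasurable hh.aestronglyMeasurable, hunif,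
    intervalIntegral.integral_of_le zero_le_one, integral_Icc_eq_integral_Ioc]

end Uniform

section QuicksortCost

theorem measurable_Cq : Measurable Cq := by
  unfold Cq
  fun_prop

theorem abs_Cq_le {x : ℝ} (hx : x ∈ Set.Icc (0 : ℝ) 1) : |Cq x| ≤ 3 := by
  obtain ⟨h0, h1⟩ := hx
  have hbound : ∀ y : ℝ, 0 ≤ y → y ≤ 1 → -1 ≤ y * Real.log y ∧ y * Real.log y ≤ 0 := by
    intro y hy0 hy1
    refine ⟨?_, Real.mul_log_nonpos hy0 hy1⟩
    rcases hy0.eq_or_lt with rfl | hy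
    · simp
    · have := (abs_lt.1 (Real.abs_log_mul_self_lt y hy hy1)).1
      linarith [mul_comm y (Real.log y)]
  obtain ⟨a1, a2⟩ := hbound x h0 h1
  obtain ⟨b1, b2⟩ := hbound (1 - x) (by linarith) (by linarith)
  unfold Cq
  rw [abs_le]
  constructor <;> nlinarith

theorem intervalIntegral_mul_log : ∫ x in (0 : ℝ)..1, x * Real.log x = -(1 / 4) := by
  have hderiv : ∀ x ∈ Set.Ioo (0 : ℝ) 1,
      HasDerivAt (fun x => x / 2 * (x * Real.log x) - x ^ 2 / 4) (x * Real.log x) x := by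
    intro x hx
    have h := (((hasDerivAt_id' x).div_const 2).mul ((hasDerivAt_id' x).mul
      (Real.hasDerivAt_log hx.1.ne'))).sub ((hasDerivAt_pow 2 x).div_const 4)
    refine h.congr_deriv ?_
    simp only [Pi.mul_apply]
    field_simp [hx.1.ne']
    ring
  rw [intervalIntegral.integral_eq_sub_of_hasDeriv_right_of_le zero_le_one (by fun_prop)
    (fun x hx => (hderiv x hx).hasDerivWithinAt)
    (Real.continuous_mul_log.intervalIntegrable 0 1)]
  norm_num

theorem intervalIntegral_Cq : ∫ x in (0 : ℝ)..1, Cq x = 0 := by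
  have hsymm : ∫ x in (0 : ℝ)..1, (1 - x) * Real.log (1 - x)
      = ∫ x in (0 : ℝ)..1, x * Real.log x := by
    simpa using intervalIntegral.integral_comp_sub_left (a := 0) (b := 1)
      (fun x => x * Real.log x) (1 : ℝ)
  have hi : IntervalIntegrable (fun x : ℝ => x * Real.log x) volume 0 1 :=
    Real.continuous_mul_log.intervalIntegrable 0 1
  have hi' : IntervalIntegrable (fun x : ℝ => (1 - x) * Real.log (1 - x)) volume 0 1 :=
    (Real.continuous_mul_log.comp (continuous_sub_left 1)).intervalIntegrable 0 1
  have hCq : Cq = fun x => 1 + 2 * (x * Real.log x) + 2 * ((1 - x) * Real.log (1 - x)) := by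
    funext x
    unfold Cq
    ring
  rw [hCq, intervalIntegral.integral_add (intervalIntegrable_const.add (hi.const_mul 2))
    (hi'.const_mul 2), intervalIntegral.integral_add intervalIntegrable_const (hi.const_mul 2),
    intervalIntegral.integral_const_mul, intervalIntegral.integral_const_mul, hsymm,
    intervalIntegral_mul_log]
  norm_num

end QuicksortCost

section Tree

variable {Ω : Type*} (U : List Bool → Ω → ℝ)

theorem measurable_sigmaGen_Lw (v w : List Bool) :
    Measurable[sigmaGen U {u | u.length < v.length + w.length}] (Lw U v w) := by
  induction w generalizing v with
  | nil => exact measurable_const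
  | cons b w ih =>
    have hU : Measurable[sigmaGen U {u | u.length < v.length + (b :: w).length}] (U v) :=
      measurable_sigmaGen (by simp)
    have hL : Measurable[sigmaGen U {u | u.length < v.length + (b :: w).length}]
        (Lw U (v ++ [b]) w) := (ih (v ++ [b])).mono (sigmaGen_mono fun u hu => by
      simp only [Set.mem_ofPred_eq, List.length_append, List.length_cons, List.length_nil]
        at hu ⊢
      omega) le_rfl
    cases b
    · exact hU.mul hL
    · exact (measurable_const.sub hU).mul hL

theorem Lw_append_singleton (v w : List Bool) (b : Bool) (ω : Ω) :
    Lw U v (w ++ [b]) ω = Lw U v w ω * (if b then 1 - U (v ++ w) ω else U (v ++ w) ω) := by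
  induction w generalizing v with
  | nil => simp [Lw]
  | cons a w ih => simp [Lw, ih, mul_assoc]

theorem Lw_mem_Icc {ω : Ω} (hω : ∀ u, U u ω ∈ Set.Icc (0 : ℝ) 1) (v w : List Bool) :
    Lw U v w ω ∈ Set.Icc (0 : ℝ) 1 := by
  induction w generalizing v with
  | nil => simp [Lw]
  | cons b w ih =>
    obtain ⟨h0, h1⟩ := hω v
    obtain ⟨l0, l1⟩ := ih (v ++ [b])
    have hstep : (if b then 1 - U v ω else U v ω) ∈ Set.Icc (0 : ℝ) 1 := by
      cases b
      · exact ⟨h0, h1⟩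
      · exact ⟨sub_nonneg.2 h1, sub_le_self 1 h0⟩
    exact ⟨mul_nonneg hstep.1 l0, mul_le_one₀ hstep.2 l0 l1⟩

end Tree

section TreeMoments

variable {Ω : Type*} [MeasurableSpace Ω] {P : Measure Ω} {U : List Bool → Ω → ℝ}

theorem measurable_step (b : Bool) : Measurable fun x : ℝ => if b then 1 - x else x := by
  cases b
  · exact measurable_id
  · exact measurable_const.sub measurable_id

theorem intervalIntegral_step_sq (b : Bool) :
    ∫ x in (0 : ℝ)..1, (if b then 1 - x else x) ^ 2 = 1 / 3 := by
  cases b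
  · norm_num [integral_pow]
  · show ∫ x in (0 : ℝ)..1, (1 - x) ^ 2 = 1 / 3
    rw [intervalIntegral.integral_comp_sub_left (fun x : ℝ => x ^ 2)]
    norm_num [integral_pow]

theorem measurable_Lw (hU : ∀ u, Measurable (U u)) (v w : List Bool) : Measurable (Lw U v w) :=
  (measurable_sigmaGen_Lw U v w).mono (sigmaGen_le hU _) le_rfl

theorem memLp_Lw_mul_Cq [IsFiniteMeasure P] (hU : ∀ u, Measurable (U u))
    (hunif : ∀ u, Measure.map (U u) P = volume.restrict (Set.Icc (0 : ℝ) 1)) (v w : List Bool) :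
    MemLp (fun ω => Lw U v w ω * Cq (U (v ++ w) ω)) 2 P := by
  refine MemLp.of_bound
    ((measurable_Lw hU v w).mul (measurable_Cq.comp (hU _))).aestronglyMeasurable 3 ?_
  filter_upwards [ae_forall_mem_Icc hU hunif] with ω hω
  obtain ⟨l0, l1⟩ := Lw_mem_Icc U hω v w
  rw [Real.norm_eq_abs, abs_mul, abs_of_nonneg l0]
  nlinarith [abs_Cq_le (hω (v ++ w)), abs_nonneg (Cq (U (v ++ w) ω))]

variable [IsProbabilityMeasure P]

theorem integral_Lw_mul_Cq (hU : ∀ u, Measurable (U u))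
    (hunif : ∀ u, Measure.map (U u) P = volume.restrict (Set.Icc (0 : ℝ) 1))
    (hind : iIndepFun U P) (v w : List Bool) :
    ∫ ω, Lw U v w ω * Cq (U (v ++ w) ω) ∂P = 0 := by
  rw [integral_mul_eq_mul_integral_of_sigmaGen hU hind (T := {v ++ w})
    (Set.disjoint_singleton_right.2 (by simp)) (measurable_sigmaGen_Lw U v w)
    (measurable_sigmaGen_comp (Set.mem_singleton _) measurable_Cq),
    integral_comp_eq_intervalIntegral (hU _) (hunif _) measurable_Cq, intervalIntegral_Cq,
    mul_zero]

theorem integral_Lw_sq (hU : ∀ u, Measurable (U u))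
    (hunif : ∀ u, Measure.map (U u) P = volume.restrict (Set.Icc (0 : ℝ) 1))
    (hind : iIndepFun U P) (v w : List Bool) :
    ∫ ω, Lw U v w ω ^ 2 ∂P = (1 / 3) ^ w.length := by
  induction w using List.reverseRecOn with
  | nil => simp [Lw]
  | append_singleton w b ih =>
    simp_rw [Lw_append_singleton, mul_pow]
    rw [integral_mul_eq_mul_integral_of_sigmaGen hU hind (T := {v ++ w})
      (Set.disjoint_singleton_right.2 (by simp)) ((measurable_sigmaGen_Lw U v w).pow_const 2)
      (measurable_sigmaGen_comp (Set.mem_singleton _) ((measurable_step b).pow_const 2)), ih,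
      integral_comp_eq_intervalIntegral (hU _) (hunif _) ((measurable_step b).pow_const 2),
      intervalIntegral_step_sq, List.length_append, List.length_singleton, pow_succ]

theorem integral_Lw_mul_Cq_sq (hU : ∀ u, Measurable (U u))
    (hunif : ∀ u, Measure.map (U u) P = volume.restrict (Set.Icc (0 : ℝ) 1))
    (hind : iIndepFun U P) (v w : List Bool) :
    ∫ ω, (Lw U v w ω * Cq (U (v ++ w) ω)) ^ 2 ∂P
      = (1 / 3) ^ w.length * ∫ x in (0 : ℝ)..1, Cq x ^ 2 := by
  simp_rw [mul_pow]
  rw [integral_mul_eq_mul_integral_of_sigmaGen hU hind (T := {v ++ w})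
    (Set.disjoint_singleton_right.2 (by simp)) ((measurable_sigmaGen_Lw U v w).pow_const 2)
    ((measurable_sigmaGen_comp (Set.mem_singleton _) measurable_Cq).pow_const 2),
    integral_Lw_sq hU hunif hind,
    integral_comp_eq_intervalIntegral (hU _) (hunif _) (measurable_Cq.pow_const 2)]

theorem integral_Lw_mul_Cq_mul_of_ne (hU : ∀ u, Measurable (U u))
    (hunif : ∀ u, Measure.map (U u) P = volume.restrict (Set.Icc (0 : ℝ) 1))
    (hind : iIndepFun U P) (v : List Bool) {w w' : List Bool} (hlen : w.length = w'.length)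
    (hne : w ≠ w') :
    ∫ ω, (Lw U v w ω * Cq (U (v ++ w) ω)) * (Lw U v w' ω * Cq (U (v ++ w') ω)) ∂P = 0 := by
  have hS : {u | u.length < v.length + w.length} ⊆
      {u : List Bool | u.length < v.length + w.length ∨ u = v ++ w'} := fun u hu => Or.inl hu
  have hS' : {u | u.length < v.length + w'.length} ⊆
      {u : List Bool | u.length < v.length + w.length ∨ u = v ++ w'} := fun u hu =>
    Or.inl (hlen ▸ hu)
  have hrest : Measurable[sigmaGen U {u | u.length < v.length + w.length ∨ u = v ++ w'}]
      fun ω => Lw U v w ω * (Lw U v w' ω * Cq (U (v ++ w') ω)) :=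
    ((measurable_sigmaGen_Lw U v w).mono (sigmaGen_mono hS) le_rfl).mul
      (((measurable_sigmaGen_Lw U v w').mono (sigmaGen_mono hS') le_rfl).mul
        (measurable_sigmaGen_comp (i := v ++ w') (Or.inr rfl) measurable_Cq))
  have hdisj : Disjoint {u : List Bool | u.length < v.length + w.length ∨ u = v ++ w'}
      {v ++ w} := Set.disjoint_singleton_right.2 (by simpa using hne)
  calc ∫ ω, (Lw U v w ω * Cq (U (v ++ w) ω)) * (Lw U v w' ω * Cq (U (v ++ w') ω)) ∂P
      = ∫ ω, (Lw U v w ω * (Lw U v w' ω * Cq (U (v ++ w') ω))) * Cq (U (v ++ w) ω) ∂P := by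
        congr 1 with ω
        ring
    _ = 0 := by
      rw [integral_mul_eq_mul_integral_of_sigmaGen hU hind hdisj hrest
        (measurable_sigmaGen_comp (Set.mem_singleton _) measurable_Cq),
        integral_comp_eq_intervalIntegral (hU _) (hunif _) measurable_Cq, intervalIntegral_Cq,
        mul_zero]

end TreeMoments

section Levels

-- `QSsum U v m ω = ∑ k ∈ range m, QSlevel U v k ω` holds by `rfl`.
def QSlevel {Ω : Type*} (U : List Bool → Ω → ℝ) (v : List Bool) (k : ℕ) (ω : Ω) : ℝ :=
  ∑ w : Fin k → Bool, Lw U v (List.ofFn w) ω * Cq (U (v ++ List.ofFn w) ω)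

variable {Ω : Type*} [MeasurableSpace Ω] {P : Measure Ω} {U : List Bool → Ω → ℝ}

theorem memLp_QSlevel [IsFiniteMeasure P] (hU : ∀ u, Measurable (U u))
    (hunif : ∀ u, Measure.map (U u) P = volume.restrict (Set.Icc (0 : ℝ) 1)) (v : List Bool)
    (k : ℕ) : MemLp (QSlevel U v k) 2 P :=
  memLp_finsetSum Finset.univ fun w _ => memLp_Lw_mul_Cq hU hunif v (List.ofFn w)

variable [IsProbabilityMeasure P]

theorem integral_QSlevel (hU : ∀ u, Measurable (U u))
    (hunif : ∀ u, Measure.map (U u) P = volume.restrict (Set.Icc (0 : ℝ) 1))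
    (hind : iIndepFun U P) (v : List Bool) (k : ℕ) : ∫ ω, QSlevel U v k ω ∂P = 0 := by
  unfold QSlevel
  rw [integral_finsetSum _ fun w _ => (memLp_Lw_mul_Cq hU hunif v _).integrable one_le_two]
  exact Finset.sum_eq_zero fun w _ => integral_Lw_mul_Cq hU hunif hind v _

theorem integral_QSlevel_sq (hU : ∀ u, Measurable (U u))
    (hunif : ∀ u, Measure.map (U u) P = volume.restrict (Set.Icc (0 : ℝ) 1))
    (hind : iIndepFun U P) (v : List Bool) (k : ℕ) :
    ∫ ω, QSlevel U v k ω ^ 2 ∂P = (2 / 3) ^ k * ∫ x in (0 : ℝ)..1, Cq x ^ 2 := by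
  unfold QSlevel
  rw [integral_sum_sq_of_orthogonal _ (fun w _ => memLp_Lw_mul_Cq hU hunif v _)
    fun w _ w' _ hne => integral_Lw_mul_Cq_mul_of_ne hU hunif hind v (by simp)
      (List.ofFn_injective.ne hne)]
  simp_rw [integral_Lw_mul_Cq_sq hU hunif hind, List.length_ofFn]
  rw [Finset.sum_const, Finset.card_univ, Fintype.card_fun, Fintype.card_bool, Fintype.card_fin,
    nsmul_eq_mul, ← mul_assoc, Nat.cast_pow, ← mul_pow]
  norm_num

theorem eLpNorm_QSlevel (hU : ∀ u, Measurable (U u))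
    (hunif : ∀ u, Measure.map (U u) P = volume.restrict (Set.Icc (0 : ℝ) 1))
    (hind : iIndepFun U P) (v : List Bool) (k : ℕ) :
    eLpNorm (QSlevel U v k) 2 P
      = ENNReal.ofReal (√(∫ x in (0 : ℝ)..1, Cq x ^ 2) * √(2 / 3) ^ k) := by
  have hpow : (2 / 3 : ℝ) ^ k = (√(2 / 3) ^ k) ^ 2 := by
    rw [← pow_mul, mul_comm, pow_mul, Real.sq_sqrt (by norm_num)]
  rw [eLpNorm_two_eq_ofReal_sqrt_integral_sq (memLp_QSlevel hU hunif v k),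
    integral_QSlevel_sq hU hunif hind, Real.sqrt_mul (by positivity), hpow,
    Real.sqrt_sq (by positivity), mul_comm]

theorem tsum_eLpNorm_QSlevel_ne_top (hU : ∀ u, Measurable (U u))
    (hunif : ∀ u, Measure.map (U u) P = volume.restrict (Set.Icc (0 : ℝ) 1))
    (hind : iIndepFun U P) (v : List Bool) :
    ∑' k, eLpNorm (QSlevel U v k) 2 P ≠ ∞ := by
  have hratio : √(2 / 3 : ℝ) < 1 := (Real.sqrt_lt' one_pos).2 (by norm_num)
  simp_rw [eLpNorm_QSlevel hU hunif hind v]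
  rw [← ENNReal.ofReal_tsum_of_nonneg (fun k => by positivity)
    ((summable_geometric_of_lt_one (Real.sqrt_nonneg _) hratio).mul_left _)]
  exact ENNReal.ofReal_ne_top

end Levels

/-- The martingale `R_m = Σ_{|v|<m} L_v·C(U^v)` converges, as
`m → ∞`, almost surely and in `L²` to a square-integrable random variable `Q` with
`E[Q] = 0` (the distribution of `Q` is the Quicksort distribution). -/
theorem quicksort_martingale_convergence {Ω : Type*} [MeasurableSpace Ω] (P : Measure Ω)
    [IsProbabilityMeasure P] (U : List Bool → Ω → ℝ)
    (hmeas : ∀ v, Measurable (U v))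
    (hunif : ∀ v, Measure.map (U v) P = volume.restrict (Set.Icc (0 : ℝ) 1))
    (hindep : iIndepFun U P) :
    ∃ Q : Ω → ℝ,
      MeasureTheory.MemLp Q 2 P
      ∧ (∀ᵐ ω ∂P, Filter.Tendsto (fun m => QSsum U ([] : List Bool) m ω)
          Filter.atTop (nhds (Q ω)))
      ∧ Filter.Tendsto (fun m => eLpNorm (fun ω => QSsum U ([] : List Bool) m ω - Q ω) 2 P)
          Filter.atTop (nhds 0)
      ∧ (∫ ω, Q ω ∂P) = 0 := by
  have hlevel k : AEStronglyMeasurable (QSlevel U [] k) P :=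
    (memLp_QSlevel hmeas hunif [] k).aestronglyMeasurable
  have hnorm := tsum_eLpNorm_QSlevel_ne_top hmeas hunif hindep []
  refine ⟨fun ω => ∑' k, QSlevel U [] k ω, memLp_tsum one_le_two hlevel hnorm, ?_,
    tendsto_eLpNorm_sum_range_sub_tsum one_le_two hlevel hnorm, ?_⟩
  · filter_upwards [ae_summable_of_tsum_eLpNorm_ne_top one_le_two hlevel hnorm] with ω hω
    exact hω.hasSum.tendsto_sum_nat
  · rw [integral_tsum_of_tsum_eLpNorm_ne_top one_le_two hlevel hnorm]
    simp [integral_QSlevel hmeas hunif hindep]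

end
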